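/- Let φ : ℝ → ℝ be twice differentiable with bounded first and second derivatives and let m > 0. Then for every x ∈ ℝ and t ∈ [0,1], the function y ↦ F_{φ,m}(y,t) is twice differentiable at x and its second derivative equals E[φ''(x+√t·Z)·W] + m·( E[φ'(x+√t·Z)²·W] − (E[φ'(x+√t·Z)·W])² ), where W = exp(m·φ(x+√t·Z)) / E[exp(m·φ(x+√t·Z))]. -/

import Mathlib

open MeasureTheory ProbabilityTheory Set

/-- `parisiF φ m x t = (1/m) log E[exp (m φ(x + √t Z))]` with `Z` standard Gaussian. -/
noncomputable def parisiF (φ : ℝ → ℝ) (m : ℝ) (x t : ℝ) : ℝ :=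
  (1 / m) * Real.log (∫ z, Real.exp (m * φ (x + Real.sqrt t * z)) ∂(gaussianReal 0 1))

/-- `φ` is twice differentiable with bounded first and second derivatives. -/
def TwiceDiffBounded (φ : ℝ → ℝ) : Prop :=
  Differentiable ℝ φ ∧ Differentiable ℝ (deriv φ) ∧
    (∃ C, ∀ x, |deriv φ x| ≤ C) ∧ (∃ C, ∀ x, |deriv (deriv φ) x| ≤ C)


/-! Put `G u = E[exp (m φ (u + √t Z))]`, so that `F = (1/m) log G`. As `φ` is Lipschitz, `exp (m φ)`
and its first two derivatives are `O(exp (B |u|))`, which is integrable for the Gaussian law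
(uniformly for `u` near a point), so `G` can be differentiated twice under the integral, giving
`G' = E[m φ' e^{mφ}]` and `G'' = E[(m φ'' + m² φ'²) e^{mφ}]`. The formula is then
`(log G)'' = G''/G - (G'/G)²`. -/

open Real

def ExpGrowth (f : ℝ → ℝ) : Prop :=
  ∃ A B, 0 ≤ B ∧ ∀ u, |f u| ≤ A * exp (B * |u|)

lemma integrable_exp_mul_abs_gaussianReal (μ : ℝ) (v : NNReal) (b : ℝ) :
    Integrable (fun z => exp (b * |z|)) (gaussianReal μ v) :=
  integrable_exp_mul_abs (X := id) (integrable_exp_mul_gaussianReal b)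
    (integrable_exp_mul_gaussianReal (-b))

namespace ExpGrowth

variable {f g : ℝ → ℝ}

lemma exists_bound_comp_add_mul (hf : ExpGrowth f) (r s : ℝ) :
    ∃ C b, ∀ u z, |u| ≤ r → |f (u + s * z)| ≤ C * exp (b * |z|) := by
  obtain ⟨A, B, hB, hA⟩ := hf
  have hA0 : 0 ≤ A := nonneg_of_mul_nonneg_left ((abs_nonneg _).trans (hA 0)) (exp_pos _)
  refine ⟨A * exp (B * r), B * |s|, fun u z hu => (hA _).trans ?_⟩
  have hshift : |u + s * z| ≤ r + |s| * |z| :=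
    (abs_add_le _ _).trans (by rw [abs_mul]; linarith)
  rw [mul_assoc, ← exp_add]
  gcongr
  nlinarith

lemma bounded_mul (hf : ExpGrowth f) (hg : ∃ C, ∀ u, |g u| ≤ C) :
    ExpGrowth fun u => g u * f u := by
  obtain ⟨A, B, hB, hA⟩ := hf
  obtain ⟨C, hC⟩ := hg
  refine ⟨C * A, B, hB, fun u => ?_⟩
  rw [abs_mul, mul_assoc]
  exact mul_le_mul (hC u) (hA u) (abs_nonneg _) ((abs_nonneg _).trans (hC 0))

variable {μ : Measure ℝ}

lemma integrable_comp_add_mul (hμ : ∀ b, Integrable (fun z => exp (b * |z|)) μ)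
    (hf : ExpGrowth f) (hf_meas : Measurable f) (u s : ℝ) :
    Integrable (fun z => f (u + s * z)) μ := by
  obtain ⟨C, b, hC⟩ := hf.exists_bound_comp_add_mul |u| s
  exact ((hμ b).const_mul C).mono'
    (hf_meas.comp (measurable_const.add (measurable_id.const_mul s))).aestronglyMeasurable
    (ae_of_all _ fun z => hC u z le_rfl)

lemma hasDerivAt_integral_comp_add_mul (hμ : ∀ b, Integrable (fun z => exp (b * |z|)) μ)
    {f' : ℝ → ℝ} (hf_deriv : ∀ v, HasDerivAt f (f' v) v) (hf : ExpGrowth f)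
    (hf' : ExpGrowth f') (hf'_meas : Measurable f') (s y : ℝ) :
    HasDerivAt (fun u => ∫ z, f (u + s * z) ∂μ) (∫ z, f' (y + s * z) ∂μ) y := by
  have hf_meas : Measurable f :=
    (continuous_iff_continuousAt.2 fun v => (hf_deriv v).continuousAt).measurable
  obtain ⟨C, b, hC⟩ := hf'.exists_bound_comp_add_mul (|y| + 1) s
  refine (hasDerivAt_integral_of_dominated_loc_of_deriv_le (Metric.ball_mem_nhds y one_pos)
    (Filter.Eventually.of_forall fun u => (hf.integrable_comp_add_mul hμ hf_meas u s).1)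
    (hf.integrable_comp_add_mul hμ hf_meas y s)
    (hf'.integrable_comp_add_mul hμ hf'_meas y s).1
    (ae_of_all _ fun z u hu => hC u z ?_) ((hμ b).const_mul C)
    (ae_of_all _ fun z u _ => ?_)).2
  · have := abs_sub_abs_le_abs_sub u y
    rw [Metric.mem_ball, Real.dist_eq] at hu
    linarith
  · exact (hf_deriv (u + s * z)).comp_add_const u (s * z)

end ExpGrowth

lemma hasDerivAt_deriv_const_mul_log {G G' : ℝ → ℝ} {G'' x : ℝ} (c : ℝ)
    (hG : ∀ y, HasDerivAt G (G' y) y) (hG0 : ∀ y, G y ≠ 0) (hG' : HasDerivAt G' G'' x) :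
    HasDerivAt (deriv fun y => c * log (G y)) (c * ((G'' * G x - G' x * G' x) / G x ^ 2)) x := by
  have hderiv : deriv (fun y => c * log (G y)) = fun y => c * (G' y / G y) :=
    funext fun y => (((hG y).log (hG0 y)).const_mul c).deriv
  rw [hderiv]
  exact (hG'.div (hG x) (hG0 x)).const_mul c

lemma hasDerivAt_exp_mul_comp {φ : ℝ → ℝ} {v : ℝ} (m : ℝ) (hφ : DifferentiableAt ℝ φ v) :
    HasDerivAt (fun v => exp (m * φ v)) (m * deriv φ v * exp (m * φ v)) v := by
  simpa [mul_comm] using (hφ.hasDerivAt.const_mul m).exp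

lemma hasDerivAt_deriv_mul_exp_mul_comp {φ : ℝ → ℝ} {v : ℝ} (m : ℝ)
    (hφ : DifferentiableAt ℝ φ v) (hφ' : DifferentiableAt ℝ (deriv φ) v) :
    HasDerivAt (fun v => m * deriv φ v * exp (m * φ v))
      ((m * deriv (deriv φ) v + m ^ 2 * deriv φ v ^ 2) * exp (m * φ v)) v :=
  ((hφ'.hasDerivAt.const_mul m).mul (hasDerivAt_exp_mul_comp m hφ)).congr_deriv (by ring)

namespace TwiceDiffBounded

variable {φ : ℝ → ℝ}

lemma expGrowth_exp_mul (hφ : TwiceDiffBounded φ) (m : ℝ) :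
    ExpGrowth fun v => exp (m * φ v) := by
  obtain ⟨hdiff, -, ⟨C, hC⟩, -⟩ := hφ
  have hLip : ∀ v, |φ v - φ 0| ≤ C * |v| := fun v => by
    simpa using Convex.norm_image_sub_le_of_norm_deriv_le (fun w _ => hdiff w)
      (fun w _ => hC w) convex_univ (mem_univ 0) (mem_univ v)
  refine ⟨exp (|m| * |φ 0|), |m| * C, mul_nonneg (abs_nonneg m) ((abs_nonneg _).trans (hC 0)),
    fun v => ?_⟩
  rw [abs_of_pos (exp_pos _), ← exp_add]
  gcongr
  calc m * φ v ≤ |m| * |φ v| := by rw [← abs_mul]; exact le_abs_self _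
    _ ≤ |m| * (|φ 0| + C * |v|) := by
        gcongr
        linarith [abs_sub_abs_le_abs_sub (φ v) (φ 0), hLip v]
    _ = _ := by ring

lemma expGrowth_deriv_exp_mul (hφ : TwiceDiffBounded φ) (m : ℝ) :
    ExpGrowth fun v => m * deriv φ v * exp (m * φ v) := by
  obtain ⟨C, hC⟩ := hφ.2.2.1
  refine (hφ.expGrowth_exp_mul m).bounded_mul (g := fun v => m * deriv φ v)
    ⟨|m| * C, fun v => ?_⟩
  rw [abs_mul]
  exact mul_le_mul_of_nonneg_left (hC v) (abs_nonneg m)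

lemma expGrowth_deriv_deriv_exp_mul (hφ : TwiceDiffBounded φ) (m : ℝ) :
    ExpGrowth fun v => (m * deriv (deriv φ) v + m ^ 2 * deriv φ v ^ 2) * exp (m * φ v) := by
  obtain ⟨C₁, hC₁⟩ := hφ.2.2.1
  obtain ⟨C₂, hC₂⟩ := hφ.2.2.2
  refine (hφ.expGrowth_exp_mul m).bounded_mul
    ⟨|m| * C₂ + m ^ 2 * C₁ ^ 2, fun v => (abs_add_le _ _).trans ?_⟩
  rw [abs_mul, abs_mul, abs_of_nonneg (sq_nonneg m), abs_pow]
  gcongr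
  exacts [hC₂ v, hC₁ v]

end TwiceDiffBounded

theorem parisiF_second_deriv (φ : ℝ → ℝ) (hφ : TwiceDiffBounded φ) (m : ℝ) (hm : 0 < m) :
    ∀ (x : ℝ), ∀ t ∈ Set.Icc (0 : ℝ) 1,
      (∀ y : ℝ, DifferentiableAt ℝ (fun z => parisiF φ m z t) y) ∧
      HasDerivAt (deriv (fun y => parisiF φ m y t))
        ((∫ z, deriv (deriv φ) (x + Real.sqrt t * z) *
            (Real.exp (m * φ (x + Real.sqrt t * z)) /
              ∫ w, Real.exp (m * φ (x + Real.sqrt t * w)) ∂(gaussianReal 0 1))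
              ∂(gaussianReal 0 1)) +
          m * ((∫ z, (deriv φ (x + Real.sqrt t * z)) ^ 2 *
                  (Real.exp (m * φ (x + Real.sqrt t * z)) /
                    ∫ w, Real.exp (m * φ (x + Real.sqrt t * w)) ∂(gaussianReal 0 1))
                  ∂(gaussianReal 0 1)) -
                (∫ z, deriv φ (x + Real.sqrt t * z) *
                  (Real.exp (m * φ (x + Real.sqrt t * z)) /
                    ∫ w, Real.exp (m * φ (x + Real.sqrt t * w)) ∂(gaussianReal 0 1))
                  ∂(gaussianReal 0 1)) ^ 2)) x := by
  intro x t _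
  have hμ := integrable_exp_mul_abs_gaussianReal 0 1
  obtain ⟨hd, hd', ⟨C₁, hC₁⟩, ⟨C₂, hC₂⟩⟩ := id hφ
  have hc := hd.continuous
  have hc' := hd'.continuous
  have hm'' : Measurable (deriv (deriv φ)) := measurable_deriv _
  have hE := hφ.expGrowth_exp_mul m
  have hG := fun y => hE.hasDerivAt_integral_comp_add_mul hμ
    (fun v => hasDerivAt_exp_mul_comp m (hd v)) (hφ.expGrowth_deriv_exp_mul m) (by fun_prop) √t y
  have hG' := (hφ.expGrowth_deriv_exp_mul m).hasDerivAt_integral_comp_add_mul hμ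
    (fun v => hasDerivAt_deriv_mul_exp_mul_comp m (hd v) (hd' v))
    (hφ.expGrowth_deriv_deriv_exp_mul m) (by fun_prop) √t x
  have hG0 : ∀ y, ∫ z, exp (m * φ (y + √t * z)) ∂(gaussianReal 0 1) ≠ 0 := fun y =>
    (integral_exp_pos (hE.integrable_comp_add_mul hμ (by fun_prop) y _)).ne'
  refine ⟨fun y => (((hG y).log (hG0 y)).const_mul (1 / m)).differentiableAt,
    (hasDerivAt_deriv_const_mul_log (1 / m) hG hG0 hG').congr_deriv ?_⟩
  have hI₂ := (hE.bounded_mul ⟨C₂, hC₂⟩).integrable_comp_add_mul hμ (by fun_prop) x √t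
  have hsq : ∀ v, |deriv φ v ^ 2| ≤ C₁ ^ 2 := fun v => by rw [abs_pow]; gcongr; exact hC₁ v
  have hI₁ := (hE.bounded_mul ⟨C₁ ^ 2, hsq⟩).integrable_comp_add_mul hμ (by fun_prop) x √t
  simp_rw [← mul_div_assoc, integral_div, add_mul, mul_assoc]
  rw [integral_add (hI₂.const_mul m) (hI₁.const_mul (m ^ 2)), integral_const_mul,
    integral_const_mul, integral_const_mul]
  field_simp [hG0 x, hm.ne']
  ring
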